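/- Let 𝒜ⁿ be a differential operator with polynomial coefficients, 𝒜ⁿ_ξ = ∑_{|α|≤2} a_{α,n}(s,ξ) D^α_ξ where each a_{α,n}(s,·) is a polynomial. Then for t < s, x ∈ ℝ^d and any f ∈ C²_0(ℝ^d): ∫_{ℝ^d} Γ₀(t,x;s,ξ) 𝒜ⁿ_ξ f(ξ) dξ = 𝒢ˣₙ(t,s) ∫_{ℝ^d} Γ₀(t,x;s,ξ) f(ξ) dξ, where 𝒢ˣₙ(t,s) = ∑_{|α|≤2} a_{α,n}(s, ℳˣ(t,s)) D^α_x and ℳˣ(t,s) = x + 𝔪(t,s) + 𝒞(t,s)∇ₓ. -/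

import Mathlib

open MeasureTheory Real Matrix

noncomputable section

/-- The `d`-dimensional Gaussian density with mean `x + mv` and covariance matrix `Cv`. -/
def gauss {d : ℕ} (Cv : Matrix (Fin d) (Fin d) ℝ) (mv : Fin d → ℝ) (x y : Fin d → ℝ) : ℝ :=
  (2 * π) ^ (-(d : ℝ) / 2) * Cv.det ^ (-(1 : ℝ) / 2) *
    Real.exp (-(1 / 2) * (dotProduct (Matrix.mulVec Cv⁻¹ (y - x - mv)) (y - x - mv)))

/-- Partial derivative `∂_{x_i}`. -/
def pd {d : ℕ} (i : Fin d) (f : (Fin d → ℝ) → ℝ) : (Fin d → ℝ) → ℝ :=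
  fun x => fderiv ℝ f x (Pi.single i 1)

/-- The `i`-th component `ℳᵢˣ = xᵢ + 𝔪ᵢ + ∑ⱼ 𝒞ᵢⱼ ∂_{xⱼ}` of `ℳˣ = x + 𝔪 + 𝒞∇ₓ`. -/
def Mop {d : ℕ} (Cv : Matrix (Fin d) (Fin d) ℝ) (mv : Fin d → ℝ) (i : Fin d)
    (f : (Fin d → ℝ) → ℝ) : (Fin d → ℝ) → ℝ :=
  fun x => (x i + mv i) * f x + ∑ j, Cv i j * pd j f x

/-- The operator `p(ℳˣ)` obtained from a polynomial `p` by substituting the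
(on `Γ₀` commuting) operators `ℳᵢˣ` for the variables: for each monomial
`c·∏ xᵢ^{kᵢ}` of `p` apply `∏ (ℳᵢˣ)^{kᵢ}` (in a fixed order) and multiply by `c`. -/
def polyOp {d : ℕ} (Cv : Matrix (Fin d) (Fin d) ℝ) (mv : Fin d → ℝ)
    (p : MvPolynomial (Fin d) ℝ) (f : (Fin d → ℝ) → ℝ) : (Fin d → ℝ) → ℝ :=
  fun x => ∑ k ∈ p.support,
    p.coeff k * ((List.finRange d).foldr (fun i g => (Mop Cv mv i)^[k i] g) f) x


/-- The second order operator `𝒜ⁿ = ∑_{|α|≤2} a_{α,n}(s,ξ)D^α_ξ` with polynomial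
coefficients, written as `a₀(ξ)f + ∑ᵢ a₁ᵢ(ξ)∂ᵢf + ∑ᵢⱼ a₂ᵢⱼ(ξ)∂ᵢ∂ⱼf`. -/
def Aop {d : ℕ} (a₀ : MvPolynomial (Fin d) ℝ) (a₁ : Fin d → MvPolynomial (Fin d) ℝ)
    (a₂ : Fin d → Fin d → MvPolynomial (Fin d) ℝ) (f : (Fin d → ℝ) → ℝ) :
    (Fin d → ℝ) → ℝ :=
  fun ξ => MvPolynomial.eval ξ a₀ * f ξ + (∑ i, MvPolynomial.eval ξ (a₁ i) * pd i f ξ) +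
    ∑ i, ∑ j, MvPolynomial.eval ξ (a₂ i j) * pd i (pd j f) ξ

/-- The operator `𝒢ˣₙ(t,s) = ∑_{|α|≤2} a_{α,n}(s,ℳˣ(t,s)) D^α_x`. -/
def Gop {d : ℕ} (Cv : Matrix (Fin d) (Fin d) ℝ) (mv : Fin d → ℝ)
    (a₀ : MvPolynomial (Fin d) ℝ) (a₁ : Fin d → MvPolynomial (Fin d) ℝ)
    (a₂ : Fin d → Fin d → MvPolynomial (Fin d) ℝ) (f : (Fin d → ℝ) → ℝ) :
    (Fin d → ℝ) → ℝ :=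
  fun x => polyOp Cv mv a₀ f x + (∑ i, polyOp Cv mv (a₁ i) (pd i f) x) +
    ∑ i, ∑ j, polyOp Cv mv (a₂ i j) (pd i (pd j f)) x

/-!
With `T g x = ∫ Γ₀(x, ξ) g(ξ) dξ` (`gaussTransform`), the two sides are `T (𝒜ⁿ f) x` and
`𝒢ˣₙ (T f) x`. Since `Γ₀(x, ξ)` depends only on `ξ - x`, `T` is a convolution and so commutes with
`∂_{x_i}` on `C¹_c`. Differentiating the Gaussian in `x` gives `𝒞 ∇ₓ Γ₀ = (ξ - x - 𝔪) Γ₀`, hence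
`ℳᵢˣ (T g) = T (ξᵢ g)` for continuous compactly supported `g`. Iterating, `p(ℳˣ) (T g) = T (p g)`
for every polynomial `p`, and the theorem follows by linearity of `T`.
-/

open scoped Convolution

section DotProduct

variable {ι : Type*} [Fintype ι]

def dotProductCLM : (ι → ℝ) →L[ℝ] (ι → ℝ) →L[ℝ] ℝ :=
  LinearMap.toContinuousLinearMap
    (LinearMap.toContinuousLinearMap.toLinearMap ∘ₗ dotProductBilin ℝ ℝ)

@[simp]
lemma dotProductCLM_apply (u v : ι → ℝ) : dotProductCLM u v = u ⬝ᵥ v := rfl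

lemma Matrix.IsSymm.mulVec_dotProduct_comm {A : Matrix ι ι ℝ} (hA : A.IsSymm) (u v : ι → ℝ) :
    A *ᵥ u ⬝ᵥ v = A *ᵥ v ⬝ᵥ u := by
  rw [dotProduct_comm, dotProduct_mulVec, ← mulVec_transpose, hA.eq]

theorem hasFDerivAt_mulVec_dotProduct_self {A : Matrix ι ι ℝ} (hA : A.IsSymm) (u : ι → ℝ) :
    HasFDerivAt (fun v => A *ᵥ v ⬝ᵥ v) ((2 : ℝ) • dotProductCLM (A *ᵥ u)) u := by
  refine (dotProductCLM.hasFDerivAt_of_bilinear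
    (LinearMap.toContinuousLinearMap (mulVecLin A)).hasFDerivAt (hasFDerivAt_id u)).congr_fderiv ?_
  ext v
  simp only [LinearMap.coe_toContinuousLinearMap', mulVecBilin_apply,
    ContinuousLinearMap.precompR_apply, ContinuousLinearMap.compL_apply,
    ContinuousLinearMap.comp_id, id_eq, _root_.add_apply, dotProductCLM_apply,
    ContinuousLinearMap.precompL_apply, hA.mulVec_dotProduct_comm v u, _root_.smul_apply,
    smul_eq_mul]
  ring

end DotProduct

section ParametricIntegral

variable {E X : Type*} [NormedAddCommGroup E] [NormedSpace ℝ E] [FiniteDimensional ℝ E]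
  [TopologicalSpace X] [MeasurableSpace X] [OpensMeasurableSpace X] {μ : Measure X}
  [IsFiniteMeasureOnCompacts μ]

theorem hasFDerivAt_integral_mul_of_hasCompactSupport {k : E → X → ℝ}
    {k' : E → X → E →L[ℝ] ℝ} {g : X → ℝ} (hk : Continuous (Function.uncurry k))
    (hk' : Continuous (Function.uncurry k')) (hdk : ∀ x ξ, HasFDerivAt (k · ξ) (k' x ξ) x)
    (hg : Continuous g) (hgc : HasCompactSupport g) (x₀ : E) :
    HasFDerivAt (fun x => ∫ ξ, k x ξ * g ξ ∂μ) (∫ ξ, g ξ • k' x₀ ξ ∂μ) x₀ := by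
  obtain ⟨M, hM⟩ := ((isCompact_closedBall x₀ 1).prod hgc).exists_bound_of_continuousOn
    ((hg.comp continuous_snd).smul hk').continuousOn
  have hint (x : E) : Integrable (fun ξ => k x ξ * g ξ) μ :=
    ((hk.comp (Continuous.prodMk_right x)).mul hg).integrable_of_hasCompactSupport hgc.mul_left
  refine hasFDerivAt_integral_of_dominated_of_fderiv_le (F' := fun x ξ => g ξ • k' x ξ)
    (bound := (tsupport g).indicator fun _ => M) (Metric.ball_mem_nhds x₀ one_pos)
    (.of_forall fun x => (hint x).aestronglyMeasurable) (hint x₀)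
    (hg.smul (hk'.comp (Continuous.prodMk_right x₀))).aestronglyMeasurable ?_ ?_ ?_
  · refine .of_forall fun ξ x hx => ?_
    by_cases hξ : ξ ∈ tsupport g
    · rw [Set.indicator_of_mem hξ]
      exact hM (x, ξ) ⟨Metric.ball_subset_closedBall hx, hξ⟩
    · simp [Set.indicator_of_notMem hξ, image_eq_zero_of_notMem_tsupport hξ]
  · exact (integrable_indicator_iff (isClosed_tsupport g).measurableSet).2
      (integrableOn_const hgc.isCompact.measure_lt_top.ne)
  · exact .of_forall fun ξ x _ => (hdk x ξ).mul_const (g ξ)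

end ParametricIntegral

variable {d : ℕ}

section PartialDerivatives

variable {f : (Fin d → ℝ) → ℝ}

lemma sum_mul_pd_eq_fderiv (w x : Fin d → ℝ) :
    ∑ j, w j * pd j f x = fderiv ℝ f x w := by
  conv_rhs => rw [← Finset.univ_sum_single w, map_sum]
  refine Finset.sum_congr rfl fun j _ => ?_
  rw [pd, ← smul_eq_mul, ← map_smul, ← Pi.single_smul', smul_eq_mul, mul_one]

lemma continuous_pd (hf : ContDiff ℝ 1 f) (i : Fin d) : Continuous (pd i f) :=
  (hf.continuous_fderiv one_ne_zero).clm_apply continuous_const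

lemma contDiff_pd {m n : WithTop ℕ∞} (hf : ContDiff ℝ n f) (hmn : m + 1 ≤ n) (i : Fin d) :
    ContDiff ℝ m (pd i f) :=
  (hf.fderiv_right hmn).clm_apply contDiff_const

lemma HasCompactSupport.pd (hf : HasCompactSupport f) (i : Fin d) :
    HasCompactSupport (pd i f) :=
  hf.fderiv_apply ℝ _

end PartialDerivatives

variable (Cv : Matrix (Fin d) (Fin d) ℝ) (mv : Fin d → ℝ)

lemma continuous_gauss_uncurry : Continuous (Function.uncurry (gauss Cv mv)) := by
  unfold gauss
  fun_prop

lemma hasFDerivAt_gauss_left (hC : Cv.IsSymm) (x ξ : Fin d → ℝ) :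
    HasFDerivAt (gauss Cv mv · ξ) (gauss Cv mv x ξ • dotProductCLM (Cv⁻¹ *ᵥ (ξ - x - mv))) x := by
  have hu : HasFDerivAt (fun x' => ξ - x' - mv) (-ContinuousLinearMap.id ℝ _) x := by
    simpa using ((hasFDerivAt_id (𝕜 := ℝ) x).const_sub ξ).sub_const mv
  refine ((((hasFDerivAt_mulVec_dotProduct_self hC.inv _).comp x hu).const_mul
    (-(1 / 2) : ℝ)).exp.const_mul _).congr_fderiv ?_
  ext v
  simp only [gauss, one_div, Function.comp_apply, neg_mul, ContinuousLinearMap.comp_neg,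
    ContinuousLinearMap.comp_id, smul_neg, neg_smul, ne_eq, OfNat.ofNat_ne_zero,
    not_false_eq_true, inv_smul_smul₀, neg_neg, _root_.smul_apply, dotProductCLM_apply,
    smul_eq_mul]
  ring

def gaussTransform (g : (Fin d → ℝ) → ℝ) (x : Fin d → ℝ) : ℝ :=
  ∫ ξ, gauss Cv mv x ξ * g ξ

variable {Cv mv}

lemma integrable_gauss_mul {g : (Fin d → ℝ) → ℝ} (hg : Continuous g) (hgc : HasCompactSupport g)
    (x : Fin d → ℝ) : Integrable fun ξ => gauss Cv mv x ξ * g ξ :=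
  ((continuous_gauss_uncurry Cv mv).comp (Continuous.prodMk_right x) |>.mul hg)
    |>.integrable_of_hasCompactSupport hgc.mul_left

lemma gaussTransform_eq_convolution (g : (Fin d → ℝ) → ℝ) :
    gaussTransform Cv mv g = (gauss Cv mv · 0) ⋆[ContinuousLinearMap.mul ℝ ℝ] g := by
  ext x
  rw [convolution_eq_swap, gaussTransform]
  congr 1 with ξ
  simp only [gauss, ContinuousLinearMap.mul_apply', zero_sub, neg_sub]

lemma pd_gaussTransform {g : (Fin d → ℝ) → ℝ} (hg : ContDiff ℝ 1 g) (hgc : HasCompactSupport g)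
    (i : Fin d) : pd i (gaussTransform Cv mv g) = gaussTransform Cv mv (pd i g) := by
  ext x
  have hψ : LocallyIntegrable (gauss Cv mv · 0) :=
    ((continuous_gauss_uncurry Cv mv).comp
      (continuous_id.prodMk continuous_const)).locallyIntegrable
  rw [pd, gaussTransform_eq_convolution, gaussTransform_eq_convolution,
    (hgc.hasFDerivAt_convolution_right _ hψ hg x).fderiv,
    convolution_precompR_apply _ hψ (hgc.fderiv ℝ) (hg.continuous_fderiv one_ne_zero)]
  rfl

lemma continuous_gauss_smul_dotProductCLM :
    Continuous (Function.uncurry fun x ξ =>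
      gauss Cv mv x ξ • dotProductCLM (Cv⁻¹ *ᵥ (ξ - x - mv))) := by
  have := continuous_gauss_uncurry Cv mv
  simp only [Function.uncurry_def] at this ⊢
  fun_prop

lemma hasFDerivAt_gaussTransform (hC : Cv.IsSymm) {g : (Fin d → ℝ) → ℝ} (hg : Continuous g)
    (hgc : HasCompactSupport g) (x : Fin d → ℝ) :
    HasFDerivAt (gaussTransform Cv mv g)
      (∫ ξ, g ξ • gauss Cv mv x ξ • dotProductCLM (Cv⁻¹ *ᵥ (ξ - x - mv))) x :=
  hasFDerivAt_integral_mul_of_hasCompactSupport (continuous_gauss_uncurry Cv mv)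
    continuous_gauss_smul_dotProductCLM (hasFDerivAt_gauss_left Cv mv hC) hg hgc x

lemma fderiv_gaussTransform_apply (hC : Cv.IsSymm) {g : (Fin d → ℝ) → ℝ} (hg : Continuous g)
    (hgc : HasCompactSupport g) (x w : Fin d → ℝ) :
    fderiv ℝ (gaussTransform Cv mv g) x w =
      ∫ ξ, gauss Cv mv x ξ * ((Cv⁻¹ *ᵥ (ξ - x - mv)) ⬝ᵥ w * g ξ) := by
  rw [(hasFDerivAt_gaussTransform hC hg hgc x).fderiv, ContinuousLinearMap.integral_apply]
  · congr 1 with ξ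
    simp only [_root_.smul_apply, dotProductCLM_apply, smul_eq_mul]
    ring
  · exact (hg.smul (continuous_gauss_smul_dotProductCLM.comp (Continuous.prodMk_right x)))
      |>.integrable_of_hasCompactSupport hgc.smul_right

lemma mop_gaussTransform (hC : Cv.IsSymm) (hdet : IsUnit Cv.det) (i : Fin d)
    {g : (Fin d → ℝ) → ℝ} (hg : Continuous g) (hgc : HasCompactSupport g) :
    Mop Cv mv i (gaussTransform Cv mv g) = gaussTransform Cv mv fun ξ => ξ i * g ξ := by
  ext x
  have hrow (u : Fin d → ℝ) : (Cv⁻¹ *ᵥ u) ⬝ᵥ Cv i = u i := by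
    rw [dotProduct_comm, ← mulVec, mulVec_mulVec, mul_nonsing_inv _ hdet, one_mulVec]
  rw [Mop, sum_mul_pd_eq_fderiv, fderiv_gaussTransform_apply hC hg hgc]
  simp only [hrow, Pi.sub_apply]
  rw [gaussTransform, gaussTransform, ← integral_const_mul, ← integral_add
    ((integrable_gauss_mul hg hgc x).const_mul _)
    (integrable_gauss_mul (g := fun ξ => (ξ i - x i - mv i) * g ξ) (by fun_prop) hgc.mul_left x)]
  congr 1 with ξ
  ring

lemma iterate_mop_gaussTransform (hC : Cv.IsSymm) (hdet : IsUnit Cv.det) (i : Fin d) (k : ℕ)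
    {g : (Fin d → ℝ) → ℝ} (hg : Continuous g) (hgc : HasCompactSupport g) :
    (Mop Cv mv i)^[k] (gaussTransform Cv mv g) =
      gaussTransform Cv mv fun ξ => ξ i ^ k * g ξ := by
  induction k with
  | zero => simp
  | succ k ih =>
    rw [Function.iterate_succ_apply', ih, mop_gaussTransform hC hdet i
      (g := fun ξ => ξ i ^ k * g ξ) (by fun_prop) hgc.mul_left]
    simp only [pow_succ, mul_assoc, mul_left_comm (_ ^ k)]

lemma foldr_iterate_mop_gaussTransform (hC : Cv.IsSymm) (hdet : IsUnit Cv.det)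
    (m : Fin d → ℕ) (l : List (Fin d)) {g : (Fin d → ℝ) → ℝ} (hg : Continuous g)
    (hgc : HasCompactSupport g) :
    l.foldr (fun i h => (Mop Cv mv i)^[m i] h) (gaussTransform Cv mv g) =
      gaussTransform Cv mv fun ξ => (l.map fun i => ξ i ^ m i).prod * g ξ := by
  induction l with
  | nil => simp
  | cons i l ih =>
    have hprod : Continuous fun ξ : Fin d → ℝ => (l.map fun i => ξ i ^ m i).prod :=
      continuous_list_prod l fun i _ => by fun_prop
    rw [List.foldr_cons, ih, iterate_mop_gaussTransform hC hdet i _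
      (g := fun ξ => _ * g ξ) (hprod.mul hg) hgc.mul_left]
    simp only [List.map_cons, List.prod_cons, mul_assoc]

lemma polyOp_gaussTransform (hC : Cv.IsSymm) (hdet : IsUnit Cv.det) (p : MvPolynomial (Fin d) ℝ)
    {g : (Fin d → ℝ) → ℝ} (hg : Continuous g) (hgc : HasCompactSupport g) :
    polyOp Cv mv p (gaussTransform Cv mv g) =
      gaussTransform Cv mv fun ξ => MvPolynomial.eval ξ p * g ξ := by
  ext x
  simp only [polyOp, foldr_iterate_mop_gaussTransform hC hdet _ _ hg hgc, ← Fin.prod_univ_def,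
    gaussTransform, ← integral_const_mul]
  rw [← integral_finsetSum _ fun k _ => (integrable_gauss_mul
    (g := fun ξ => (∏ i, ξ i ^ k i) * g ξ) (by fun_prop) hgc.mul_left x).const_mul _]
  congr 1 with ξ
  simp only [MvPolynomial.eval_eq', Finset.sum_mul, Finset.mul_sum]
  exact Finset.sum_congr rfl fun k _ => by ring

variable (Cv mv) in
lemma gaussTransform_aop (a₀ : MvPolynomial (Fin d) ℝ) (a₁ : Fin d → MvPolynomial (Fin d) ℝ)
    (a₂ : Fin d → Fin d → MvPolynomial (Fin d) ℝ) {f : (Fin d → ℝ) → ℝ} (hf : ContDiff ℝ 2 f)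
    (hfc : HasCompactSupport f) (x : Fin d → ℝ) :
    gaussTransform Cv mv (Aop a₀ a₁ a₂ f) x =
      gaussTransform Cv mv (fun ξ => MvPolynomial.eval ξ a₀ * f ξ) x +
      ∑ i, gaussTransform Cv mv (fun ξ => MvPolynomial.eval ξ (a₁ i) * pd i f ξ) x +
      ∑ i, ∑ j,
        gaussTransform Cv mv (fun ξ => MvPolynomial.eval ξ (a₂ i j) * pd i (pd j f) ξ) x := by
  have hint (p : MvPolynomial (Fin d) ℝ) {g : (Fin d → ℝ) → ℝ} (hg : Continuous g)
      (hgc : HasCompactSupport g) :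
      Integrable fun ξ => gauss Cv mv x ξ * (MvPolynomial.eval ξ p * g ξ) :=
    integrable_gauss_mul (g := fun ξ => _ * g ξ) ((MvPolynomial.continuous_eval p).mul hg)
      hgc.mul_left x
  have h₀ := hint a₀ hf.continuous hfc
  have h₁ (i : Fin d) := hint (a₁ i) (continuous_pd (hf.of_le one_le_two) i) (hfc.pd i)
  have h₂ (i j : Fin d) := hint (a₂ i j)
    (continuous_pd (contDiff_pd hf one_add_one_eq_two.le j) i) ((hfc.pd j).pd i)
  simp only [gaussTransform, Aop, mul_add, Finset.mul_sum]
  rw [integral_add (h₀.fun_add (integrable_finsetSum _ fun i _ => h₁ i))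
      (integrable_finsetSum _ fun i _ => integrable_finsetSum _ fun j _ => h₂ i j),
    integral_add h₀ (integrable_finsetSum _ fun i _ => h₁ i), integral_finsetSum _ fun i _ => h₁ i,
    integral_finsetSum _ fun i _ => integrable_finsetSum _ fun j _ => h₂ i j]
  simp only [integral_finsetSum _ fun j _ => h₂ _ j]

theorem integral_Aop_eq_Gop_integral_general {d : ℕ}
    (Cv : Matrix (Fin d) (Fin d) ℝ) (hCv : Cv.PosDef) (mv : Fin d → ℝ)
    (a₀ : MvPolynomial (Fin d) ℝ) (a₁ : Fin d → MvPolynomial (Fin d) ℝ)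
    (a₂ : Fin d → Fin d → MvPolynomial (Fin d) ℝ)
    (f : (Fin d → ℝ) → ℝ) (hf : ContDiff ℝ 2 f) (hfc : HasCompactSupport f)
    (x : Fin d → ℝ) :
    ∫ ξ : Fin d → ℝ, gauss Cv mv x ξ * Aop a₀ a₁ a₂ f ξ =
      Gop Cv mv a₀ a₁ a₂ (fun x' => ∫ ξ : Fin d → ℝ, gauss Cv mv x' ξ * f ξ) x := by
  have hC : Cv.IsSymm := isHermitian_iff_isSymm.mp hCv.isHermitian
  have hdet : IsUnit Cv.det := isUnit_iff_ne_zero.mpr hCv.det_pos.ne'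
  have hf₁ : ContDiff ℝ 1 f := hf.of_le one_le_two
  have hpdf₁ (j : Fin d) : ContDiff ℝ 1 (pd j f) := contDiff_pd hf one_add_one_eq_two.le j
  change gaussTransform Cv mv (Aop a₀ a₁ a₂ f) x = Gop Cv mv a₀ a₁ a₂ (gaussTransform Cv mv f) x
  simp only [Gop, pd_gaussTransform hf₁ hfc, pd_gaussTransform (hpdf₁ _) (hfc.pd _),
    polyOp_gaussTransform hC hdet _ hf.continuous hfc,
    polyOp_gaussTransform hC hdet _ (continuous_pd hf₁ _) (hfc.pd _),
    polyOp_gaussTransform hC hdet _ (continuous_pd (hpdf₁ _) _) ((hfc.pd _).pd _)]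
  exact gaussTransform_aop Cv mv a₀ a₁ a₂ hf hfc x

/-- for `f ∈ C²₀(ℝ^d)`,
`∫ Γ₀(t,x;s,ξ) 𝒜ⁿ_ξ f(ξ) dξ = 𝒢ˣₙ(t,s) ∫ Γ₀(t,x;s,ξ) f(ξ) dξ`. -/
theorem integral_Aop_eq_Gop_integral {d : ℕ} (t s : ℝ) (hts : t < s)
    (Cv : Matrix (Fin d) (Fin d) ℝ) (hCv : Cv.PosDef) (mv : Fin d → ℝ)
    (a₀ : MvPolynomial (Fin d) ℝ) (a₁ : Fin d → MvPolynomial (Fin d) ℝ)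
    (a₂ : Fin d → Fin d → MvPolynomial (Fin d) ℝ)
    (f : (Fin d → ℝ) → ℝ) (hf : ContDiff ℝ 2 f) (hfc : HasCompactSupport f)
    (x : Fin d → ℝ) :
    ∫ ξ : Fin d → ℝ, gauss Cv mv x ξ * Aop a₀ a₁ a₂ f ξ =
      Gop Cv mv a₀ a₁ a₂ (fun x' => ∫ ξ : Fin d → ℝ, gauss Cv mv x' ξ * f ξ) x :=
  integral_Aop_eq_Gop_integral_general Cv hCv mv a₀ a₁ a₂ f hf hfc x
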